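/- arXiv:math/0003083 — 3 statements merged into one kernel-verified Lean document; each statement's English description precedes it below -/
import Mathlib

section
/- Let g+1 ≤ r ≤ q ≤ k with r−1 ∈ Lbar, let Ψ, Ψ' ∈ 𝔛nb[g,r−1], and let Ξ ∈ 𝔛[r,q]. Then θ_{Ψ'} · θ_{Ψ∪Ξ} = θ_Ψ · θ_{Ψ'∪Ξ}; moreover θ_Ψ divides θ_{Ψ∪Ξ} in ℤ. -/
namespace CP

/-- `X_j := (λ'_j − j) − (λ'_{k+1} − (k+1))`. -/
def X (k : ℤ) (lam : ℤ → ℤ) (j : ℤ) : ℤ := (lam j - j) - (lam (k + 1) - (k + 1))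

/-- Decidable membership predicate for the set of `i`-steps `L(i)`. -/
def memL (g k : ℤ) (lam : ℤ → ℤ) (i : ℤ) (j : ℤ) : Prop :=
  g + 1 ≤ j ∧ j ≤ k - 1 ∧ lam (j + 1) = lam j - i

instance (g k : ℤ) (lam : ℤ → ℤ) (i j : ℤ) : Decidable (memL g k lam i j) := by
  unfold memL; infer_instance

/-- The set of `i`-steps `L(i) = { j ∈ [g+1,k−1] | λ'_{j+1} = λ'_j − i }`. -/
def L (g k : ℤ) (lam : ℤ → ℤ) (i : ℤ) : Set ℤ := {j : ℤ | memL g k lam i j}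

/-- `Lbar = [g,k] ∖ (L(0) ∪ L(1))`. -/
def Lbar (g k : ℤ) (lam : ℤ → ℤ) : Set ℤ :=
  Set.Icc g k \ (L g k lam 0 ∪ L g k lam 1)

/-- Falling factorial `x^(m) = x(x−1)⋯(x−m+1)`. -/
def ff (x : ℤ) (m : ℕ) : ℤ := ∏ i ∈ Finset.range m, (x - (i : ℤ))

/-- The set `𝔛[p,q]` of partial patterns on `[p,q]`: subsets of `{1,2}×[p,q]`
containing `{1,2}×({g,k+1} ∩ [p,q])`; for `p > q` it is `{∅}`. -/
def Patt (g k p q : ℤ) : Set (Finset (ℤ × ℤ)) :=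
  if p ≤ q then
    {Xi | Xi ⊆ ({1, 2} : Finset ℤ) ×ˢ Finset.Icc p q ∧
      (({1, 2} : Finset ℤ) ×ˢ (({g, k + 1} : Finset ℤ) ∩ Finset.Icc p q)) ⊆ Xi}
  else {∅}

/-- The `r`-th column `Ξ_r = { i ∈ {1,2} | (i,r) ∈ Ξ }` of a partial pattern. -/
def col (Xi : Finset (ℤ × ℤ)) (r : ℤ) : Finset ℤ :=
  ({1, 2} : Finset ℤ).filter (fun i => (i, r) ∈ Xi)

/-- The weight factor at an index `r ∈ L(0)`, in terms of the columns `c = Ξ_r`, `d = Ξ_{r+1}`. -/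
def wL0 (x : ℤ) (c d : Finset ℤ) : ℤ :=
  if c = ({1, 2} : Finset ℤ) ∧ d = ({1, 2} : Finset ℤ) then x * (x + 1)
  else if (c = {1} ∨ c = {2}) ∧ d = ({1, 2} : Finset ℤ) then x + 1
  else if (c = ({1} : Finset ℤ) ∧ d = {1}) ∨ (c = ({2} : Finset ℤ) ∧ d = {2}) then
    (x - 1) * (x + 1)
  else if c = ∅ ∧ d = ({1, 2} : Finset ℤ) then 2
  else if c = ∅ ∧ (d = ({1} : Finset ℤ) ∨ d = {2}) then x - 1
  else if c = ∅ ∧ d = ∅ then (x - 1) * x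
  else 0

/-- The weight factor at an index `r ∈ L(1)`. -/
def wL1 (x : ℤ) (c d : Finset ℤ) : ℤ :=
  if c = ({1, 2} : Finset ℤ) ∧ d = ({1, 2} : Finset ℤ) then -(x * (x - 3))
  else if c = ({1, 2} : Finset ℤ) ∧ (d = ({1} : Finset ℤ) ∨ d = {2}) then x * (x - 2)
  else if c = ({1, 2} : Finset ℤ) ∧ d = ∅ then 0
  else if d = ({1, 2} : Finset ℤ) then 2
  else if d = ({1} : Finset ℤ) ∨ d = {2} then x - 2
  else (x - 2) * (x - 1)

/-- The weight factor of the recursion defining `θ`, at index `r`, with columns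
`c = Ξ_r` and `d = Ξ_{r+1}`. -/
def w (g k : ℤ) (lam : ℤ → ℤ) (r : ℤ) (c d : Finset ℤ) : ℤ :=
  if memL g k lam 0 r then wL0 (X k lam r) c d
  else if memL g k lam 1 r then wL1 (X k lam r) c d
  else (Nat.factorial d.card : ℤ) * ff (X k lam (r + 1)) (2 - d.card)

/-- `θ_Ξ` for `Ξ ∈ 𝔛[g,r]`: the recursion `θ_{{1,2}×{g}} = 1`, `θ_{Ξ'} = w·θ_Ξ`
unfolds to the product of the local weight factors. -/
noncomputable def theta (g k : ℤ) (lam : ℤ → ℤ) (r : ℤ) (Xi : Finset (ℤ × ℤ)) : ℤ :=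
  ∏ j ∈ Finset.Icc g (r - 1), w g k lam j (col Xi j) (col Xi (j + 1))

/-- `R_{[r,s]} = (∏_{j ∈ L(0)∩[r,s]} X_j(X_j−1)) · (∏_{j ∈ L(1)∩[r,s]} X_j)`. -/
noncomputable def Rfac (g k : ℤ) (lam : ℤ → ℤ) (r s : ℤ) : ℤ :=
  (∏ j ∈ (Finset.Icc r s).filter (fun j => memL g k lam 0 j), X k lam j * (X k lam j - 1)) *
  (∏ j ∈ (Finset.Icc r s).filter (fun j => memL g k lam 1 j), X k lam j)

/-- `Ξ ∈ 𝔛[p,q]` is bulky if some `u ∈ [p,q−1] ∩ L(0)` has `(Ξ_u, Ξ_{u+1})` among the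
seven listed pairs, or some `u ∈ [p,q−1] ∩ L(1)` has `(Ξ_u, Ξ_{u+1}) = ({1,2},∅)`. -/
def Bulky (g k : ℤ) (lam : ℤ → ℤ) (p q : ℤ) (Xi : Finset (ℤ × ℤ)) : Prop :=
  (∃ u, p ≤ u ∧ u ≤ q - 1 ∧ u ∈ L g k lam 0 ∧
    ((col Xi u = ({1, 2} : Finset ℤ) ∧ col Xi (u + 1) = {2}) ∨
     (col Xi u = ({1, 2} : Finset ℤ) ∧ col Xi (u + 1) = {1}) ∨
     (col Xi u = ({1} : Finset ℤ) ∧ col Xi (u + 1) = {2}) ∨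
     (col Xi u = ({2} : Finset ℤ) ∧ col Xi (u + 1) = {1}) ∨
     (col Xi u = ({1} : Finset ℤ) ∧ col Xi (u + 1) = ∅) ∨
     (col Xi u = ({2} : Finset ℤ) ∧ col Xi (u + 1) = ∅) ∨
     (col Xi u = ({1, 2} : Finset ℤ) ∧ col Xi (u + 1) = ∅))) ∨
  (∃ u, p ≤ u ∧ u ≤ q - 1 ∧ u ∈ L g k lam 1 ∧
    col Xi u = ({1, 2} : Finset ℤ) ∧ col Xi (u + 1) = ∅)

end CP

open CP

private lemma col_union' (A B : Finset (ℤ × ℤ)) (j : ℤ) :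
    col (A ∪ B) j = col A j ∪ col B j := by
  unfold col; ext i
  simp only [Finset.mem_filter, Finset.mem_union]
  tauto

private lemma col_eq_empty' {A : Finset (ℤ × ℤ)} {S : Finset ℤ} {p q j : ℤ}
    (h : A ⊆ S ×ˢ Finset.Icc p q) (hj : j ∉ Finset.Icc p q) : col A j = ∅ := by
  unfold col
  rw [Finset.filter_eq_empty_iff]
  intro i _ hi
  exact hj (Finset.mem_product.mp (h hi)).2

private lemma theta_split' (g k r q : ℤ) (lam : ℤ → ℤ) (hr : g + 1 ≤ r) (hrq : r ≤ q)
    (Psi Xi : Finset (ℤ × ℤ))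
    (hPsi : Psi ⊆ ({1, 2} : Finset ℤ) ×ˢ Finset.Icc g (r - 1))
    (hXi : Xi ⊆ ({1, 2} : Finset ℤ) ×ˢ Finset.Icc r q)
    (h0 : ¬ memL g k lam 0 (r - 1)) (h1 : ¬ memL g k lam 1 (r - 1)) :
    theta g k lam q (Psi ∪ Xi) = theta g k lam (r - 1) Psi *
      ((Nat.factorial (col Xi r).card : ℤ) * ff (X k lam r) (2 - (col Xi r).card) *
       ∏ j ∈ Finset.Ioc (r - 1) (q - 1), w g k lam j (col Xi j) (col Xi (j + 1))) := by
  have hcolXi : ∀ j : ℤ, j < r → col Xi j = ∅ := fun j hj =>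
    col_eq_empty' hXi (by simp [Finset.mem_Icc]; omega)
  have hcolPsi : ∀ j : ℤ, r - 1 < j → col Psi j = ∅ := fun j hj =>
    col_eq_empty' hPsi (fun hmem => by rw [Finset.mem_Icc] at hmem; omega)
  unfold theta
  have e1 : Finset.Icc g (q - 1) = Finset.Ioc (g - 1) (q - 1) := by
    ext x; simp [Finset.mem_Icc, Finset.mem_Ioc] <;> omega
  have e2 : Finset.Icc g (r - 1 - 1) = Finset.Ioc (g - 1) (r - 2) := by
    ext x; simp [Finset.mem_Icc, Finset.mem_Ioc]; omega
  rw [e1, e2]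
  rw [← Finset.Ioc_union_Ioc_eq_Ioc (show (g - 1 : ℤ) ≤ r - 2 by omega) (show (r - 2 : ℤ) ≤ q - 1 by omega),
    Finset.prod_union (by rw [Finset.disjoint_left]; intro a ha hb; rw [Finset.mem_Ioc] at ha hb; omega),
    ← Finset.Ioc_union_Ioc_eq_Ioc (show (r - 2 : ℤ) ≤ r - 1 by omega) (show (r - 1 : ℤ) ≤ q - 1 by omega),
    Finset.prod_union (by rw [Finset.disjoint_left]; intro a ha hb; rw [Finset.mem_Ioc] at ha hb; omega)]
  have eA : ∏ j ∈ Finset.Ioc (g - 1) (r - 2), w g k lam j (col (Psi ∪ Xi) j) (col (Psi ∪ Xi) (j + 1))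
      = ∏ j ∈ Finset.Ioc (g - 1) (r - 2), w g k lam j (col Psi j) (col Psi (j + 1)) := by
    apply Finset.prod_congr rfl
    intro j hj
    rw [Finset.mem_Ioc] at hj
    rw [col_union', col_union', hcolXi j (by omega), hcolXi (j + 1) (by omega)]
    simp
  have eB : Finset.Ioc (r - 2) (r - 1) = {r - 1} := by
    ext x; simp [Finset.mem_Ioc]; omega
  have eC : ∏ j ∈ Finset.Ioc (r - 1) (q - 1), w g k lam j (col (Psi ∪ Xi) j) (col (Psi ∪ Xi) (j + 1))
      = ∏ j ∈ Finset.Ioc (r - 1) (q - 1), w g k lam j (col Xi j) (col Xi (j + 1)) := by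
    apply Finset.prod_congr rfl
    intro j hj
    rw [Finset.mem_Ioc] at hj
    rw [col_union', col_union', hcolPsi j (by omega), hcolPsi (j + 1) (by omega)]
    simp
  rw [eA, eB, eC, Finset.prod_singleton]
  have eD : w g k lam (r - 1) (col (Psi ∪ Xi) (r - 1)) (col (Psi ∪ Xi) (r - 1 + 1))
      = (Nat.factorial (col Xi r).card : ℤ) * ff (X k lam r) (2 - (col Xi r).card) := by
    have hr1 : r - 1 + 1 = r := by ring
    rw [hr1, col_union', col_union', hcolPsi r (by omega), Finset.empty_union]
    unfold w
    rw [if_neg h0, if_neg h1, hr1]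
  rw [eD]
  try ring

theorem stmt10 (g k : ℤ) (lam : ℤ → ℤ) (hgk : g < k)
    (hdec : ∀ j : ℤ, g ≤ j → j ≤ k → lam (j + 1) ≤ lam j)
    (r q : ℤ) (hr : g + 1 ≤ r) (hrq : r ≤ q) (hqk : q ≤ k)
    (hrLbar : (r - 1) ∈ Lbar g k lam)
    (Psi Psi' Xi : Finset (ℤ × ℤ))
    (hPsi : Psi ∈ Patt g k g (r - 1)) (hPsinb : ¬ Bulky g k lam g (r - 1) Psi)
    (hPsi' : Psi' ∈ Patt g k g (r - 1)) (hPsinb' : ¬ Bulky g k lam g (r - 1) Psi')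
    (hXi : Xi ∈ Patt g k r q) :
    theta g k lam (r - 1) Psi' * theta g k lam q (Psi ∪ Xi) =
      theta g k lam (r - 1) Psi * theta g k lam q (Psi' ∪ Xi) ∧
    theta g k lam (r - 1) Psi ∣ theta g k lam q (Psi ∪ Xi) := by
  have h0 : ¬ memL g k lam 0 (r - 1) := by
    have := hrLbar.2
    simp only [L, Set.mem_union, Set.mem_setOf_eq] at this
    tauto
  have h1 : ¬ memL g k lam 1 (r - 1) := by
    have := hrLbar.2
    simp only [L, Set.mem_union, Set.mem_setOf_eq] at this
    tauto
  have hPsiS : Psi ⊆ ({1, 2} : Finset ℤ) ×ˢ Finset.Icc g (r - 1) := by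
    rw [Patt, if_pos (by omega : g ≤ r - 1)] at hPsi
    exact hPsi.1
  have hPsiS' : Psi' ⊆ ({1, 2} : Finset ℤ) ×ˢ Finset.Icc g (r - 1) := by
    rw [Patt, if_pos (by omega : g ≤ r - 1)] at hPsi'
    exact hPsi'.1
  have hXiS : Xi ⊆ ({1, 2} : Finset ℤ) ×ˢ Finset.Icc r q := by
    rw [Patt, if_pos hrq] at hXi
    exact hXi.1
  have e1 := theta_split' g k r q lam hr hrq Psi Xi hPsiS hXiS h0 h1
  have e2 := theta_split' g k r q lam hr hrq Psi' Xi hPsiS' hXiS h0 h1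
  rw [e1, e2]
  exact ⟨by ring, dvd_mul_right _ _⟩
end

section
/- Let g+1 ≤ q ≤ k with [g+1,q−1] ⊆ L(1). Then the ideal of ℤ generated by { θ_Ξ : Ξ ∈ 𝔛[g,q] with Ξ_{g+1} = {1,2} } equals the principal ideal generated by 2 · R_{[g+1,q−1]}. -/
open CP

namespace CPAux

lemma not_memL0_of_memL1 {g k : ℤ} {lam : ℤ → ℤ} {j : ℤ} (h : memL g k lam 1 j) :
    ¬ memL g k lam 0 j := by
  rintro ⟨_, _, h0⟩; obtain ⟨_, _, h1⟩ := h; omega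

lemma X_succ {g k : ℤ} {lam : ℤ → ℤ} {r : ℤ} (h : memL g k lam 1 r) :
    X k lam (r + 1) = X k lam r - 2 := by
  obtain ⟨_, _, h1⟩ := h; unfold X; rw [h1]; ring

lemma w_g (g k : ℤ) (lam : ℤ → ℤ) (c : Finset ℤ) :
    w g k lam g c ({1, 2} : Finset ℤ) = 2 := by
  unfold w
  rw [if_neg (by rintro ⟨h, -⟩; omega), if_neg (by rintro ⟨h, -⟩; omega)]
  norm_num [show (({1, 2} : Finset ℤ)).card = 2 from by decide, ff]

lemma w_L1 {g k : ℤ} {lam : ℤ → ℤ} {r : ℤ} (h : memL g k lam 1 r) (c d : Finset ℤ) :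
    w g k lam r c d = wL1 (X k lam r) c d := by
  unfold w; rw [if_neg (not_memL0_of_memL1 h), if_pos h]

lemma wL1_ff (x : ℤ) : wL1 x ({1, 2} : Finset ℤ) ({1, 2} : Finset ℤ) = -(x * (x - 3)) := by
  unfold wL1; rw [if_pos ⟨rfl, rfl⟩]

lemma wL1_fs1 (x : ℤ) : wL1 x ({1, 2} : Finset ℤ) ({1} : Finset ℤ) = x * (x - 2) := by
  unfold wL1; rw [if_neg (by decide), if_pos (by decide)]

lemma wL1_fs2 (x : ℤ) : wL1 x ({1, 2} : Finset ℤ) ({2} : Finset ℤ) = x * (x - 2) := by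
  unfold wL1; rw [if_neg (by decide), if_pos (by decide)]

lemma wL1_fe (x : ℤ) : wL1 x ({1, 2} : Finset ℤ) (∅ : Finset ℤ) = 0 := by
  unfold wL1; rw [if_neg (by decide), if_neg (by decide), if_pos (by decide)]

lemma wL1_nf_f (x : ℤ) (c : Finset ℤ) (hc : c ≠ ({1, 2} : Finset ℤ)) :
    wL1 x c ({1, 2} : Finset ℤ) = 2 := by
  unfold wL1
  rw [if_neg (fun h => hc h.1), if_neg (fun h => hc h.1), if_neg (fun h => hc h.1), if_pos rfl]

lemma wL1_nf_s1 (x : ℤ) (c : Finset ℤ) (hc : c ≠ ({1, 2} : Finset ℤ)) :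
    wL1 x c ({1} : Finset ℤ) = x - 2 := by
  unfold wL1
  rw [if_neg (fun h => hc h.1), if_neg (fun h => hc h.1), if_neg (fun h => hc h.1),
    if_neg (by decide), if_pos (Or.inl rfl)]

lemma wL1_nf_s2 (x : ℤ) (c : Finset ℤ) (hc : c ≠ ({1, 2} : Finset ℤ)) :
    wL1 x c ({2} : Finset ℤ) = x - 2 := by
  unfold wL1
  rw [if_neg (fun h => hc h.1), if_neg (fun h => hc h.1), if_neg (fun h => hc h.1),
    if_neg (by decide), if_pos (Or.inr rfl)]

lemma wL1_nf_e (x : ℤ) (c : Finset ℤ) (hc : c ≠ ({1, 2} : Finset ℤ)) :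
    wL1 x c (∅ : Finset ℤ) = (x - 2) * (x - 1) := by
  unfold wL1
  rw [if_neg (fun h => hc h.1), if_neg (fun h => hc h.1), if_neg (fun h => hc h.1),
    if_neg (by decide), if_neg (by decide)]

lemma wL1_comb (x : ℤ) (c : Finset ℤ) :
    wL1 x c ({1, 2} : Finset ℤ) + wL1 x c ({1} : Finset ℤ) = x := by
  by_cases hc : c = ({1, 2} : Finset ℤ)
  · subst hc; rw [wL1_ff, wL1_fs1]; ring
  · rw [wL1_nf_f x c hc, wL1_nf_s1 x c hc]; ring

lemma col_cases (Xi : Finset (ℤ × ℤ)) (t : ℤ) :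
    col Xi t = ∅ ∨ col Xi t = {1} ∨ col Xi t = {2} ∨ col Xi t = ({1, 2} : Finset ℤ) := by
  have hs : col Xi t ⊆ ({1, 2} : Finset ℤ) := Finset.filter_subset _ _
  have hmem : col Xi t ∈ (({1, 2} : Finset ℤ)).powerset := Finset.mem_powerset.mpr hs
  have hp : (({1, 2} : Finset ℤ)).powerset = {∅, {1}, {2}, {1, 2}} := by decide
  rw [hp] at hmem
  simpa using hmem

lemma col_union (Xi : Finset (ℤ × ℤ)) (d : Finset ℤ) (t j : ℤ) (h : j ≠ t) :
    col (Xi ∪ d ×ˢ {t}) j = col Xi j := by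
  ext i
  simp only [col, Finset.mem_filter, Finset.mem_union, Finset.mem_product, Finset.mem_singleton]
  constructor
  · rintro ⟨hi, hm | ⟨-, ht⟩⟩
    · exact ⟨hi, hm⟩
    · exact absurd ht h
  · rintro ⟨hi, hm⟩
    exact ⟨hi, Or.inl hm⟩

lemma col_union_at (Xi : Finset (ℤ × ℤ)) (d : Finset ℤ) (t : ℤ)
    (hd : d ⊆ ({1, 2} : Finset ℤ)) (h : ∀ i, (i, t) ∉ Xi) :
    col (Xi ∪ d ×ˢ {t}) t = d := by
  ext i
  simp only [col, Finset.mem_filter, Finset.mem_union, Finset.mem_product, Finset.mem_singleton]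
  constructor
  · rintro ⟨hi, hm | ⟨hmd, -⟩⟩
    · exact absurd hm (h i)
    · exact hmd
  · intro hi
    exact ⟨hd hi, Or.inr ⟨hi, trivial⟩⟩

lemma Icc_insert (a b : ℤ) (h : a ≤ b) :
    Finset.Icc a b = insert b (Finset.Icc a (b - 1)) := by
  ext x; simp only [Finset.mem_Icc, Finset.mem_insert]; omega

lemma theta_succ (g k : ℤ) (lam : ℤ → ℤ) (r : ℤ) (Xi : Finset (ℤ × ℤ)) (h : g ≤ r) :
    theta g k lam (r + 1) Xi
      = theta g k lam r Xi * w g k lam r (col Xi r) (col Xi (r + 1)) := by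
  unfold theta
  rw [show r + 1 - 1 = r by ring, Icc_insert g r h,
    Finset.prod_insert (by simp only [Finset.mem_Icc]; omega)]
  ring

lemma theta_congr (g k : ℤ) (lam : ℤ → ℤ) (r : ℤ) (Xi Xi' : Finset (ℤ × ℤ))
    (h : ∀ j, g ≤ j → j ≤ r → col Xi j = col Xi' j) :
    theta g k lam r Xi = theta g k lam r Xi' := by
  unfold theta
  apply Finset.prod_congr rfl
  intro j hj
  simp only [Finset.mem_Icc] at hj
  rw [h j hj.1 (by omega), h (j + 1) (by omega) (by omega)]

lemma mem_Patt (g k p q : ℤ) (hpq : p ≤ q) (Xi : Finset (ℤ × ℤ)) :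
    Xi ∈ Patt g k p q ↔ Xi ⊆ ({1, 2} : Finset ℤ) ×ˢ Finset.Icc p q ∧
      (({1, 2} : Finset ℤ) ×ˢ (({g, k + 1} : Finset ℤ) ∩ Finset.Icc p q)) ⊆ Xi := by
  unfold Patt; rw [if_pos hpq]; rfl

lemma dvd_theta (g k : ℤ) (lam : ℤ → ℤ) (Xi : Finset (ℤ × ℤ))
    (hcol : col Xi (g + 1) = ({1, 2} : Finset ℤ)) :
    ∀ q, g + 1 ≤ q →
      (∀ j, g + 1 ≤ j → j ≤ q - 1 → memL g k lam 1 j) →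
      (2 * ∏ j ∈ Finset.Icc (g + 1) (q - 1), X k lam j) *
        (if col Xi q = ({1, 2} : Finset ℤ) then 1 else X k lam q) ∣ theta g k lam q Xi := by
  refine Int.le_induction
    (motive := fun q _ => (∀ j, g + 1 ≤ j → j ≤ q - 1 → memL g k lam 1 j) →
      (2 * ∏ j ∈ Finset.Icc (g + 1) (q - 1), X k lam j) *
        (if col Xi q = ({1, 2} : Finset ℤ) then 1 else X k lam q) ∣ theta g k lam q Xi)
    ?_ ?_
  · intro _
    rw [hcol, if_pos rfl, Finset.Icc_eq_empty (by omega : ¬ (g + 1 : ℤ) ≤ g + 1 - 1),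
      Finset.prod_empty, mul_one, mul_one]
    have hth : theta g k lam (g + 1) Xi = w g k lam g (col Xi g) (col Xi (g + 1)) := by
      unfold theta
      rw [show g + 1 - 1 = g by ring, Finset.Icc_self, Finset.prod_singleton]
    rw [hth, hcol, w_g]
  · intro q hq IH hL1
    have hmem : memL g k lam 1 q := hL1 q hq (by omega)
    have hIH := IH (fun j hj1 hj2 => hL1 j hj1 (by omega))
    have hXs : X k lam (q + 1) = X k lam q - 2 := X_succ hmem
    have hth : theta g k lam (q + 1) Xi
        = theta g k lam q Xi * wL1 (X k lam q) (col Xi q) (col Xi (q + 1)) := by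
      rw [theta_succ g k lam q Xi (by omega), w_L1 hmem]
    have hP : (∏ j ∈ Finset.Icc (g + 1) (q + 1 - 1), X k lam j)
        = (∏ j ∈ Finset.Icc (g + 1) (q - 1), X k lam j) * X k lam q := by
      rw [show q + 1 - 1 = q by ring, Icc_insert (g + 1) q hq,
        Finset.prod_insert (by simp only [Finset.mem_Icc]; omega)]
      ring
    rw [hth, hP]
    set P : ℤ := ∏ j ∈ Finset.Icc (g + 1) (q - 1), X k lam j with hPdef
    by_cases hcf : col Xi q = ({1, 2} : Finset ℤ)
    · rw [if_pos hcf, mul_one] at hIH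
      rcases col_cases Xi (q + 1) with hd | hd | hd | hd <;> rw [hcf, hd]
      · rw [wL1_fe, mul_zero]; exact dvd_zero _
      · rw [wL1_fs1, if_neg (by decide)]
        have h1 : 2 * (P * X k lam q) * X k lam (q + 1)
            = (2 * P) * (X k lam q * (X k lam q - 2)) := by rw [hXs]; ring
        rw [h1]
        exact mul_dvd_mul hIH dvd_rfl
      · rw [wL1_fs2, if_neg (by decide)]
        have h1 : 2 * (P * X k lam q) * X k lam (q + 1)
            = (2 * P) * (X k lam q * (X k lam q - 2)) := by rw [hXs]; ring
        rw [h1]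
        exact mul_dvd_mul hIH dvd_rfl
      · rw [wL1_ff, if_pos rfl, mul_one]
        have h1 : 2 * (P * X k lam q) = (2 * P) * X k lam q := by ring
        rw [h1]
        exact mul_dvd_mul hIH ⟨-(X k lam q - 3), by ring⟩
    · rw [if_neg hcf] at hIH
      rcases col_cases Xi (q + 1) with hd | hd | hd | hd <;> rw [hd]
      · rw [wL1_nf_e _ _ hcf, if_neg (by decide)]
        have h1 : 2 * (P * X k lam q) * X k lam (q + 1)
            = (2 * P * X k lam q) * (X k lam q - 2) := by rw [hXs]; ring
        rw [h1]
        exact mul_dvd_mul hIH ⟨X k lam q - 1, rfl⟩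
      · rw [wL1_nf_s1 _ _ hcf, if_neg (by decide)]
        have h1 : 2 * (P * X k lam q) * X k lam (q + 1)
            = (2 * P * X k lam q) * (X k lam q - 2) := by rw [hXs]; ring
        rw [h1]
        exact mul_dvd_mul hIH dvd_rfl
      · rw [wL1_nf_s2 _ _ hcf, if_neg (by decide)]
        have h1 : 2 * (P * X k lam q) * X k lam (q + 1)
            = (2 * P * X k lam q) * (X k lam q - 2) := by rw [hXs]; ring
        rw [h1]
        exact mul_dvd_mul hIH dvd_rfl
      · rw [wL1_nf_f _ _ hcf, if_pos rfl, mul_one]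
        have h1 : 2 * (P * X k lam q) = (2 * P * X k lam q) := by ring
        rw [h1]
        exact hIH.mul_right _

lemma Rfac_mem (g k : ℤ) (lam : ℤ → ℤ) :
    ∀ q, g + 1 ≤ q → q ≤ k → (∀ j, g + 1 ≤ j → j ≤ q - 1 → memL g k lam 1 j) →
      (2 * ∏ j ∈ Finset.Icc (g + 1) (q - 1), X k lam j) ∈
        Ideal.span ((fun Xi => theta g k lam q Xi) ''
          {Xi | Xi ∈ Patt g k g q ∧ col Xi (g + 1) = ({1, 2} : Finset ℤ)}) := by
  refine Int.le_induction
    (motive := fun q _ => q ≤ k → (∀ j, g + 1 ≤ j → j ≤ q - 1 → memL g k lam 1 j) →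
      (2 * ∏ j ∈ Finset.Icc (g + 1) (q - 1), X k lam j) ∈
        Ideal.span ((fun Xi => theta g k lam q Xi) ''
          {Xi | Xi ∈ Patt g k g q ∧ col Xi (g + 1) = ({1, 2} : Finset ℤ)}))
    ?_ ?_
  · intro hqk _
    set Xi0 : Finset (ℤ × ℤ) := ({1, 2} : Finset ℤ) ×ˢ Finset.Icc g (g + 1) with hXi0
    have hcol : ∀ t, g ≤ t → t ≤ g + 1 → col Xi0 t = ({1, 2} : Finset ℤ) := by
      intro t h1 h2
      apply Finset.filter_true_of_mem
      intro i hi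
      rw [hXi0, Finset.mem_product]
      exact ⟨hi, Finset.mem_Icc.mpr ⟨h1, h2⟩⟩
    have hth : theta g k lam (g + 1) Xi0 = 2 := by
      unfold theta
      rw [show g + 1 - 1 = g by ring, Finset.Icc_self, Finset.prod_singleton,
        hcol (g + 1) (by omega) (by omega), w_g]
    have hPatt : Xi0 ∈ Patt g k g (g + 1) := by
      rw [mem_Patt g k g (g + 1) (by omega)]
      constructor
      · exact Finset.Subset.refl _
      · exact Finset.product_subset_product (Finset.Subset.refl _) Finset.inter_subset_right
    rw [Finset.Icc_eq_empty (by omega : ¬ (g + 1 : ℤ) ≤ g + 1 - 1), Finset.prod_empty, mul_one]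
    exact Ideal.subset_span ⟨Xi0, ⟨hPatt, hcol (g + 1) (by omega) (by omega)⟩, hth⟩
  · intro q hq IH hqk1 hL1
    have hqk : q ≤ k := by omega
    have hIH := IH hqk (fun j h1 h2 => hL1 j h1 (by omega))
    have hmem : memL g k lam 1 q := hL1 q hq (by omega)
    have hP : 2 * ∏ j ∈ Finset.Icc (g + 1) (q + 1 - 1), X k lam j
        = X k lam q * (2 * ∏ j ∈ Finset.Icc (g + 1) (q - 1), X k lam j) := by
      rw [show q + 1 - 1 = q by ring, Icc_insert (g + 1) q hq,
        Finset.prod_insert (by simp only [Finset.mem_Icc]; omega)]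
      ring
    rw [hP]
    have key : ∀ s ∈ ((fun Xi => theta g k lam q Xi) ''
        {Xi | Xi ∈ Patt g k g q ∧ col Xi (g + 1) = ({1, 2} : Finset ℤ)}),
        X k lam q * s ∈ Ideal.span ((fun Xi => theta g k lam (q + 1) Xi) ''
          {Xi | Xi ∈ Patt g k g (q + 1) ∧ col Xi (g + 1) = ({1, 2} : Finset ℤ)}) := by
      rintro s ⟨Xi', ⟨hPatt, hc1⟩, rfl⟩
      have hsub : Xi' ⊆ ({1, 2} : Finset ℤ) ×ˢ Finset.Icc g q :=
        ((mem_Patt g k g q (by omega) Xi').mp hPatt).1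
      have hnot : ∀ i, (i, q + 1) ∉ Xi' := by
        intro i hi
        have := hsub hi
        rw [Finset.mem_product, Finset.mem_Icc] at this
        omega
      have main : ∀ d : Finset ℤ, d ⊆ ({1, 2} : Finset ℤ) →
          (Xi' ∪ d ×ˢ {q + 1}) ∈
            {Xi | Xi ∈ Patt g k g (q + 1) ∧ col Xi (g + 1) = ({1, 2} : Finset ℤ)} ∧
          theta g k lam (q + 1) (Xi' ∪ d ×ˢ {q + 1})
            = theta g k lam q Xi' * wL1 (X k lam q) (col Xi' q) d := by
        intro d hd
        have hcol_eq : ∀ j, j ≠ q + 1 → col (Xi' ∪ d ×ˢ {q + 1}) j = col Xi' j :=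
          fun j hj => col_union Xi' d (q + 1) j hj
        refine ⟨⟨?_, ?_⟩, ?_⟩
        · rw [mem_Patt g k g (q + 1) (by omega)]
          constructor
          · apply Finset.union_subset
            · exact hsub.trans (Finset.product_subset_product (Finset.Subset.refl _)
                (Finset.Icc_subset_Icc (le_refl g) (by omega)))
            · exact Finset.product_subset_product hd
                (by rw [Finset.singleton_subset_iff, Finset.mem_Icc]; omega)
          · have h1 : ({g, k + 1} : Finset ℤ) ∩ Finset.Icc g (q + 1)
                = ({g, k + 1} : Finset ℤ) ∩ Finset.Icc g q := by
              ext x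
              simp only [Finset.mem_inter, Finset.mem_insert, Finset.mem_singleton,
                Finset.mem_Icc]
              omega
            rw [h1]
            exact (((mem_Patt g k g q (by omega) Xi').mp hPatt).2).trans
              Finset.subset_union_left
        · rw [hcol_eq (g + 1) (by omega)]; exact hc1
        · rw [theta_succ g k lam q _ (by omega), w_L1 hmem,
            col_union_at Xi' d (q + 1) hd hnot, hcol_eq q (by omega)]
          congr 1
          apply theta_congr
          intro j h1 h2
          exact hcol_eq j (by omega)
      have m1 := main ({1, 2} : Finset ℤ) (Finset.Subset.refl _)
      have m2 := main ({1} : Finset ℤ) (by decide)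
      have hsum : X k lam q * theta g k lam q Xi'
          = theta g k lam (q + 1) (Xi' ∪ (({1, 2} : Finset ℤ) ×ˢ {q + 1}))
            + theta g k lam (q + 1) (Xi' ∪ (({1} : Finset ℤ) ×ˢ {q + 1})) := by
        rw [m1.2, m2.2, ← mul_add, wL1_comb, mul_comm]
      rw [hsum]
      exact add_mem (Ideal.subset_span (Set.mem_image_of_mem _ m1.1))
        (Ideal.subset_span (Set.mem_image_of_mem _ m2.1))
    exact Submodule.span_induction
      (fun x hx => key x hx)
      (by rw [mul_zero]; exact zero_mem _)
      (fun x y _ _ hx hy => by rw [mul_add]; exact add_mem hx hy)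
      (fun a x _ hx => by
        rw [smul_eq_mul, ← mul_assoc, mul_comm (X k lam q) a, mul_assoc, ← smul_eq_mul]
        exact Submodule.smul_mem _ a hx)
      hIH

end CPAux

open CPAux in
theorem stmt16 (g k : ℤ) (lam : ℤ → ℤ) (hgk : g < k)
    (hdec : ∀ j : ℤ, g ≤ j → j ≤ k → lam (j + 1) ≤ lam j)
    (q : ℤ) (hq1 : g + 1 ≤ q) (hqk : q ≤ k)
    (hL1 : ∀ j : ℤ, g + 1 ≤ j → j ≤ q - 1 → j ∈ L g k lam 1) :
    Ideal.span ((fun Xi => theta g k lam q Xi) ''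
        {Xi | Xi ∈ Patt g k g q ∧ col Xi (g + 1) = ({1, 2} : Finset ℤ)}) =
      Ideal.span {2 * Rfac g k lam (g + 1) (q - 1)} := by
  have hL1' : ∀ j : ℤ, g + 1 ≤ j → j ≤ q - 1 → memL g k lam 1 j := fun j h1 h2 => hL1 j h1 h2
  have hR : Rfac g k lam (g + 1) (q - 1) = ∏ j ∈ Finset.Icc (g + 1) (q - 1), X k lam j := by
    unfold Rfac
    rw [show (Finset.Icc (g + 1) (q - 1)).filter (fun j => memL g k lam 0 j) = ∅ from
        Finset.filter_false_of_mem (fun j hj => by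
          rw [Finset.mem_Icc] at hj; exact not_memL0_of_memL1 (hL1' j hj.1 hj.2)),
      show (Finset.Icc (g + 1) (q - 1)).filter (fun j => memL g k lam 1 j)
          = Finset.Icc (g + 1) (q - 1) from
        Finset.filter_true_of_mem (fun j hj => by
          rw [Finset.mem_Icc] at hj; exact hL1' j hj.1 hj.2),
      Finset.prod_empty, one_mul]
  rw [hR]
  apply le_antisymm
  · rw [Ideal.span_le]
    rintro x ⟨Xi, ⟨hPatt, hcol⟩, rfl⟩
    rw [SetLike.mem_coe, Ideal.mem_span_singleton]
    have hd := dvd_theta g k lam Xi hcol q hq1 hL1'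
    refine dvd_trans ?_ hd
    by_cases hc : col Xi q = ({1, 2} : Finset ℤ)
    · rw [if_pos hc, mul_one]
    · rw [if_neg hc]; exact dvd_mul_right _ _
  · rw [Ideal.span_le, Set.singleton_subset_iff]
    exact Rfac_mem g k lam q hq1 hqk hL1'
end

section
/- Let g+1 ≤ q ≤ k with q ≥ g+3 and [g+1,q−1] ⊆ L(1), and let Ξ ∈ 𝔛nb[g,q] with e_{Ξ,g} = e_{Ξ,g+1} = e_{Ξ,q} = 2 and e_{Ξ,j} = 1 for all j in [g+2,q−1]. Then θ_Ξ = 4 · R_{[g+1,q−1]}. -/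
open CP

private lemma col_subset' (Xi : Finset (ℤ × ℤ)) (r : ℤ) : col Xi r ⊆ ({1, 2} : Finset ℤ) :=
  Finset.filter_subset _ _

private lemma col_eq_pair' {Xi : Finset (ℤ × ℤ)} {r : ℤ} (h : (col Xi r).card = 2) :
    col Xi r = ({1, 2} : Finset ℤ) :=
  Finset.eq_of_subset_of_card_le (col_subset' Xi r) (by rw [h]; decide)

private lemma col_eq_single' {Xi : Finset (ℤ × ℤ)} {r : ℤ} (h : (col Xi r).card = 1) :
    col Xi r = ({1} : Finset ℤ) ∨ col Xi r = ({2} : Finset ℤ) := by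
  obtain ⟨a, ha⟩ := Finset.card_eq_one.mp h
  have hm : a ∈ ({1, 2} : Finset ℤ) := col_subset' Xi r (ha ▸ Finset.mem_singleton_self a)
  simp only [Finset.mem_insert, Finset.mem_singleton] at hm
  rcases hm with h1 | h2
  · left; rw [ha, h1]
  · right; rw [ha, h2]

private lemma prod_shift' (a b a' b' : ℤ) (f : ℤ → ℤ) (ha : a' = a + 1) (hb : b' = b + 1) :
    ∏ j ∈ Finset.Icc a b, f (j + 1) = ∏ j ∈ Finset.Icc a' b', f j := by
  subst ha hb
  rw [show Finset.Icc (a + 1) (b + 1) = (Finset.Icc a b).image (· + 1) from ?_]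
  · rw [Finset.prod_image (fun x _ y _ h => by omega)]
  · ext x
    simp only [Finset.mem_Icc, Finset.mem_image]
    constructor
    · intro hx; exact ⟨x - 1, by omega, by omega⟩
    · rintro ⟨y, hy, rfl⟩; omega

theorem stmt17 (g k : ℤ) (lam : ℤ → ℤ) (hgk : g < k)
    (hdec : ∀ j : ℤ, g ≤ j → j ≤ k → lam (j + 1) ≤ lam j)
    (q : ℤ) (hq1 : g + 1 ≤ q) (hqk : q ≤ k) (hq3 : g + 3 ≤ q)
    (hL1 : ∀ j : ℤ, g + 1 ≤ j → j ≤ q - 1 → j ∈ L g k lam 1)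
    (Xi : Finset (ℤ × ℤ))
    (hXi : Xi ∈ Patt g k g q) (hXinb : ¬ Bulky g k lam g q Xi)
    (hwg : (col Xi g).card = 2) (hwg1 : (col Xi (g + 1)).card = 2)
    (hwq : (col Xi q).card = 2)
    (hwt1 : ∀ j : ℤ, g + 2 ≤ j → j ≤ q - 1 → (col Xi j).card = 1) :
    theta g k lam q Xi = 4 * Rfac g k lam (g + 1) (q - 1) := by
  have hL1' : ∀ j : ℤ, g + 1 ≤ j → j ≤ q - 1 → memL g k lam 1 j := fun j h1 h2 => hL1 j h1 h2
  have hnot0 : ∀ j : ℤ, g + 1 ≤ j → j ≤ q - 1 → ¬ memL g k lam 0 j := by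
    intro j h1 h2 h0
    have ha := (hL1' j h1 h2).2.2
    have hb := h0.2.2
    omega
  have hXstep : ∀ j : ℤ, g + 1 ≤ j → j ≤ q - 1 → X k lam (j + 1) = X k lam j - 2 := by
    intro j h1 h2
    have := (hL1' j h1 h2).2.2
    simp only [X]
    omega
  have hcolg : col Xi g = ({1, 2} : Finset ℤ) := col_eq_pair' hwg
  have hcolg1 : col Xi (g + 1) = ({1, 2} : Finset ℤ) := col_eq_pair' hwg1
  have hcolq : col Xi q = ({1, 2} : Finset ℤ) := col_eq_pair' hwq
  -- weight at g
  have hwgval : w g k lam g (col Xi g) (col Xi (g + 1)) = 2 := by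
    unfold w
    rw [if_neg (fun h => by have := h.1; omega : ¬ memL g k lam 0 g),
        if_neg (fun h => by have := h.1; omega : ¬ memL g k lam 1 g), hcolg1]
    norm_num [ff]
  -- weight at g+1
  have hwg1val : w g k lam (g + 1) (col Xi (g + 1)) (col Xi (g + 1 + 1)) =
      X k lam (g + 1) * (X k lam (g + 1) - 2) := by
    rw [show g + 1 + 1 = g + 2 from by ring]
    unfold w
    rw [if_neg (hnot0 (g + 1) (by omega) (by omega)),
        if_pos (hL1' (g + 1) (by omega) (by omega))]
    have hd := col_eq_single' (hwt1 (g + 2) (by omega) (by omega))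
    unfold wL1
    rw [hcolg1]
    rcases hd with h | h <;> rw [h]
    · rw [if_neg (by decide), if_pos (by decide)]
    · rw [if_neg (by decide), if_pos (by decide)]
  -- middle weights
  have hmid : ∀ j ∈ Finset.Icc (g + 2) (q - 2),
      w g k lam j (col Xi j) (col Xi (j + 1)) = X k lam j - 2 := by
    intro j hj
    rw [Finset.mem_Icc] at hj
    have hc := col_eq_single' (hwt1 j (by omega) (by omega))
    have hd := col_eq_single' (hwt1 (j + 1) (by omega) (by omega))
    unfold w
    rw [if_neg (hnot0 j (by omega) (by omega)), if_pos (hL1' j (by omega) (by omega))]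
    unfold wL1
    rcases hc with h | h <;> rcases hd with h' | h' <;> rw [h, h'] <;>
      rw [if_neg (by decide), if_neg (by decide), if_neg (by decide), if_neg (by decide),
          if_pos (by decide)]
  -- weight at q-1
  have hwqval : w g k lam (q - 1) (col Xi (q - 1)) (col Xi (q - 1 + 1)) = 2 := by
    have hq' : q - 1 + 1 = q := by omega
    unfold w
    rw [if_neg (hnot0 (q - 1) (by omega) (by omega)),
        if_pos (hL1' (q - 1) (by omega) (by omega))]
    have hc := col_eq_single' (hwt1 (q - 1) (by omega) (by omega))
    unfold wL1
    rw [hq', hcolq]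
    rcases hc with h | h <;> rw [h] <;>
      rw [if_neg (by decide), if_neg (by decide), if_neg (by decide), if_pos (by decide)]
  -- split the theta product
  have hsplit : Finset.Icc g (q - 1) =
      insert g (insert (g + 1) (insert (q - 1) (Finset.Icc (g + 2) (q - 2)))) := by
    ext x
    simp only [Finset.mem_Icc, Finset.mem_insert]
    omega
  have hθ : theta g k lam q Xi =
      2 * (X k lam (g + 1) * (X k lam (g + 1) - 2) *
        (2 * ∏ j ∈ Finset.Icc (g + 2) (q - 2), (X k lam j - 2))) := by
    rw [theta, hsplit,
        Finset.prod_insert (by simp only [Finset.mem_insert, Finset.mem_Icc]; omega),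
        Finset.prod_insert (by simp only [Finset.mem_insert, Finset.mem_Icc]; omega),
        Finset.prod_insert (by simp only [Finset.mem_Icc]; omega),
        hwgval, hwg1val, hwqval, Finset.prod_congr rfl hmid]
  -- compute Rfac
  have hR : Rfac g k lam (g + 1) (q - 1) = ∏ j ∈ Finset.Icc (g + 1) (q - 1), X k lam j := by
    unfold Rfac
    have h0 : (Finset.Icc (g + 1) (q - 1)).filter (fun j => memL g k lam 0 j) = ∅ := by
      rw [Finset.filter_eq_empty_iff]
      intro j hj
      rw [Finset.mem_Icc] at hj
      exact hnot0 j hj.1 hj.2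
    have h1 : (Finset.Icc (g + 1) (q - 1)).filter (fun j => memL g k lam 1 j) =
        Finset.Icc (g + 1) (q - 1) := by
      rw [Finset.filter_eq_self]
      intro j hj
      rw [Finset.mem_Icc] at hj
      exact hL1' j hj.1 hj.2
    rw [h0, h1]
    simp
  -- shift the middle product
  have hshift : ∏ j ∈ Finset.Icc (g + 2) (q - 2), (X k lam j - 2) =
      ∏ j ∈ Finset.Icc (g + 3) (q - 1), X k lam j := by
    have hc : ∀ j ∈ Finset.Icc (g + 2) (q - 2), X k lam j - 2 = X k lam (j + 1) := by
      intro j hj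
      rw [Finset.mem_Icc] at hj
      rw [hXstep j (by omega) (by omega)]
    rw [Finset.prod_congr rfl hc,
        prod_shift' (g + 2) (q - 2) (g + 3) (q - 1) (X k lam) (by omega) (by omega)]
  -- split the RHS product
  have hRsplit : Finset.Icc (g + 1) (q - 1) =
      insert (g + 1) (insert (g + 2) (Finset.Icc (g + 3) (q - 1))) := by
    ext x
    simp only [Finset.mem_Icc, Finset.mem_insert]
    omega
  have hX2 : X k lam (g + 1 + 1) = X k lam (g + 1) - 2 := hXstep (g + 1) (by omega) (by omega)
  have hg2 : g + 1 + 1 = g + 2 := by omega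
  rw [hθ, hshift, hR, hRsplit,
      Finset.prod_insert (by simp only [Finset.mem_insert, Finset.mem_Icc]; omega),
      Finset.prod_insert (by simp only [Finset.mem_Icc]; omega),
      ← hg2, hX2]
  ring
end
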